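/- arXiv:math/0312210 — 2 statements merged into one kernel-verified Lean document; each statement's English description precedes it below -/
import Mathlib

section
/- Let u_1,...,u_k and v_1,...,v_k be two families of nonnegative functions on Ω, each family having pairwise disjoint supports. For λ ∈ [0,1] define û_i = u_i - Σ_{h≠i} u_h, v̂_i = v_i - Σ_{h≠i} v_h, and w_i = (λû_i + (1-λ)v̂_i)^+. Then the functions w_1,...,w_k have pairwise disjoint supports: w_i(x)·w_j(x) = 0 for i≠j at every point x. -/
/-!
Write `û_i = u_i - ∑_{h ≠ i} u_h`. Since the `u_h` are nonnegative, `u_j ≤ ∑_{h ≠ i} u_h` for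
`j ≠ i`, so `û_i + û_j ≤ 0`, and likewise for `v`. The combination `λ û + (1 - λ) v̂` with
`λ ∈ [0, 1]` inherits this, so of two such values at most one is positive and the product of
their positive parts vanishes.
-/

open Finset

theorem max_mul_max_eq_zero_of_add_nonpos {α : Type*}
    [Ring α] [LinearOrder α] [IsOrderedAddMonoid α] {a b : α} (h : a + b ≤ 0) :
    max a 0 * max b 0 = 0 := by
  rcases le_or_gt a 0 with ha | ha
  · rw [max_eq_right ha, zero_mul]
  · rw [max_eq_right ((le_add_of_nonneg_left ha.le).trans h), mul_zero]

theorem sub_sum_erase_add_sub_sum_erase_nonpos {ι α : Type*} [DecidableEq ι]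
    [AddCommGroup α] [PartialOrder α] [IsOrderedAddMonoid α] {s : Finset ι} {f : ι → α}
    (hf : ∀ h ∈ s, 0 ≤ f h) {i j : ι} (hi : i ∈ s) (hj : j ∈ s) (hij : i ≠ j) :
    (f i - ∑ h ∈ s.erase i, f h) + (f j - ∑ h ∈ s.erase j, f h) ≤ 0 := by
  have hj_le : f j ≤ ∑ h ∈ s.erase i, f h :=
    single_le_sum (fun h hh => hf h (mem_of_mem_erase hh)) (mem_erase.2 ⟨hij.symm, hj⟩)
  have hi_le : f i ≤ ∑ h ∈ s.erase j, f h :=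
    single_le_sum (fun h hh => hf h (mem_of_mem_erase hh)) (mem_erase.2 ⟨hij, hi⟩)
  calc (f i - ∑ h ∈ s.erase i, f h) + (f j - ∑ h ∈ s.erase j, f h)
      = (f j - ∑ h ∈ s.erase i, f h) + (f i - ∑ h ∈ s.erase j, f h) := by abel
    _ ≤ 0 + 0 := add_le_add (sub_nonpos.2 hj_le) (sub_nonpos.2 hi_le)
    _ = 0 := add_zero 0

theorem stmt_1_general {N k : ℕ} (Ω : Set (EuclideanSpace ℝ (Fin N)))
    (u v : Fin k → EuclideanSpace ℝ (Fin N) → ℝ) (lam : ℝ) (hlam : lam ∈ Set.Icc (0:ℝ) 1)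
    (hu : ∀ i x, x ∈ Ω → 0 ≤ u i x) (hv : ∀ i x, x ∈ Ω → 0 ≤ v i x) :
    ∀ i j x, i ≠ j → x ∈ Ω →
      max (lam * (u i x - ∑ h ∈ univ.erase i, u h x)
            + (1 - lam) * (v i x - ∑ h ∈ univ.erase i, v h x)) 0 *
      max (lam * (u j x - ∑ h ∈ univ.erase j, u h x)
            + (1 - lam) * (v j x - ∑ h ∈ univ.erase j, v h x)) 0 = 0 := by
  intro i j x hij hx
  apply max_mul_max_eq_zero_of_add_nonpos
  have hu_hat := sub_sum_erase_add_sub_sum_erase_nonpos (f := fun h => u h x)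
    (fun h _ => hu h x hx) (mem_univ i) (mem_univ j) hij
  have hv_hat := sub_sum_erase_add_sub_sum_erase_nonpos (f := fun h => v h x)
    (fun h _ => hv h x hx) (mem_univ i) (mem_univ j) hij
  linarith [mul_nonpos_of_nonneg_of_nonpos hlam.1 hu_hat,
    mul_nonpos_of_nonneg_of_nonpos (sub_nonneg.2 hlam.2) hv_hat]

theorem stmt_1 {N k : ℕ} (Ω : Set (EuclideanSpace ℝ (Fin N)))
    (u v : Fin k → EuclideanSpace ℝ (Fin N) → ℝ) (lam : ℝ) (hlam : lam ∈ Set.Icc (0:ℝ) 1)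
    (hu : ∀ i x, x ∈ Ω → 0 ≤ u i x) (hv : ∀ i x, x ∈ Ω → 0 ≤ v i x)
    (hud : ∀ i j x, i ≠ j → x ∈ Ω → u i x * u j x = 0)
    (hvd : ∀ i j x, i ≠ j → x ∈ Ω → v i x * v j x = 0) :
    ∀ i j x, i ≠ j → x ∈ Ω →
      max (lam * (u i x - ∑ h ∈ univ.erase i, u h x)
            + (1 - lam) * (v i x - ∑ h ∈ univ.erase i, v h x)) 0 *
      max (lam * (u j x - ∑ h ∈ univ.erase j, u h x)
            + (1 - lam) * (v j x - ∑ h ∈ univ.erase j, v h x)) 0 = 0 :=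
  stmt_1_general Ω u v lam hlam hu hv
end

section
/- Let F : ℝ → ℝ be concave on [0,∞) with F(0) = 0 and F ≤ 0 on [0,∞), extended to ℝ as an even function. Let a, b ≥ 0 and λ ∈ (0,1) be such that λa - (1-λ)b > 0. Then -F(λa - (1-λ)b) ≤ -λF(a) - (1-λ)F(b). -/
/-!
Since `F` is concave on `[0, ∞)` with its maximum `F 0 = 0` at the left endpoint, it is antitone
there, and concavity between `0` and `a` gives `λ F(a) ≤ F(λ a)`. As `0 < λa - (1-λ)b ≤ λa`,
`F(λa - (1-λ)b) ≥ F(λa) ≥ λ F(a) ≥ λ F(a) + (1-λ) F(b)`, the last step because `F(b) ≤ 0`.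
-/

open Set

section

variable {𝕜 E β : Type*} [Field 𝕜] [LinearOrder 𝕜] [IsStrictOrderedRing 𝕜]
  [AddCommGroup E] [Module 𝕜 E] [AddCommGroup β] [PartialOrder β] [IsOrderedAddMonoid β]
  [Module 𝕜 β] [PosSMulMono 𝕜 β]

theorem ConcaveOn.smul_le_map_smul {s : Set E} {f : E → β} (hf : ConcaveOn 𝕜 s f)
    (h0s : (0 : E) ∈ s) (hf0 : 0 ≤ f 0) {x : E} (hx : x ∈ s) {t : 𝕜} (ht₀ : 0 ≤ t)
    (ht₁ : t ≤ 1) : t • f x ≤ f (t • x) := by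
  have key := hf.2 h0s hx (sub_nonneg.2 ht₁) ht₀ (sub_add_cancel 1 t)
  rw [smul_zero, zero_add] at key
  exact le_trans (le_add_of_nonneg_left (smul_nonneg (sub_nonneg.2 ht₁) hf0)) key

end

theorem ConcaveOn.antitoneOn_of_le_left {𝕜 β : Type*} [Field 𝕜] [LinearOrder 𝕜]
    [IsStrictOrderedRing 𝕜] [AddCommMonoid β] [LinearOrder β] [IsOrderedCancelAddMonoid β]
    [Module 𝕜 β] [PosSMulStrictMono 𝕜 β] {f : 𝕜 → β} {c : 𝕜} (hf : ConcaveOn 𝕜 (Ici c) f)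
    (hmax : ∀ x ∈ Ici c, f x ≤ f c) : AntitoneOn f (Ici c) := by
  intro x hx y hy hxy
  rcases (mem_Ici.1 hx).eq_or_lt with rfl | hcx
  · exact hmax y hy
  · exact hf.right_le_of_le_left'' self_mem_Ici hy hcx hxy (hmax x hx)

theorem stmt_3_general (F : ℝ → ℝ)
    (hconc : ConcaveOn ℝ (Set.Ici 0) F) (h0 : F 0 = 0)
    (hneg : ∀ s, 0 ≤ s → F s ≤ 0)
    (a b lam : ℝ) (ha : 0 ≤ a) (hb : 0 ≤ b) (hlam : lam ∈ Set.Ioo (0:ℝ) 1)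
    (hpos : 0 < lam * a - (1 - lam) * b) :
    -F (lam * a - (1 - lam) * b) ≤ -(lam * F a) - (1 - lam) * F b := by
  obtain ⟨hlam₀, hlam₁⟩ := hlam
  have hle : lam * a - (1 - lam) * b ≤ lam * a := by nlinarith
  have hanti : AntitoneOn F (Ici 0) :=
    hconc.antitoneOn_of_le_left fun x hx => h0.symm ▸ hneg x hx
  have hFb : (1 - lam) * F b ≤ 0 := mul_nonpos_of_nonneg_of_nonpos (by linarith) (hneg b hb)
  calc -F (lam * a - (1 - lam) * b)
      ≤ -F (lam * a) := neg_le_neg (hanti hpos.le (hpos.le.trans hle) hle)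
    _ ≤ -(lam * F a) :=
        neg_le_neg (hconc.smul_le_map_smul self_mem_Ici h0.ge ha hlam₀.le hlam₁.le)
    _ ≤ -(lam * F a) - (1 - lam) * F b := by linarith

theorem stmt_3 (F : ℝ → ℝ) (heven : ∀ s, F (-s) = F s)
    (hconc : ConcaveOn ℝ (Set.Ici 0) F) (h0 : F 0 = 0)
    (hneg : ∀ s, 0 ≤ s → F s ≤ 0)
    (a b lam : ℝ) (ha : 0 ≤ a) (hb : 0 ≤ b) (hlam : lam ∈ Set.Ioo (0:ℝ) 1)
    (hpos : 0 < lam * a - (1 - lam) * b) :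
    -F (lam * a - (1 - lam) * b) ≤ -(lam * F a) - (1 - lam) * F b :=
  stmt_3_general F hconc h0 hneg a b lam ha hb hlam hpos
end
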